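/- arXiv:2505.22562 — 4 statements merged into one kernel-verified Lean document; each statement's English description precedes it below -/
import Mathlib

section
/- Let ξ ∈ ∂B and let (x_n) be a sequence in B converging in ℂ² to ξ. Then for every fixed z ∈ B, the sequence d(x_n, z) + log(1 − ‖x_n‖²) converges to log 4 − B_ξ(z). (Equivalently: d(x_n, z) = −B_ξ(z) − log(1 − ‖x_n‖) + log 2 + o(1) as n → ∞; this is the paper's boundary asymptotic d(x_n,z) = B_ξ(z,o) − log(1 − ‖x_n‖) + o(1) with the sign and additive constant made precise.) -/
noncomputable section

/-- The inverse hyperbolic cosine on `[1, ∞)`. -/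
def arcosh (s : ℝ) : ℝ := Real.log (s + Real.sqrt (s ^ 2 - 1))

/-- The Bergman distance on the unit ball model of the complex hyperbolic plane. -/
def bergmanDist (x z : EuclideanSpace ℂ (Fin 2)) : ℝ :=
  2 * arcosh (‖(inner ℂ x z : ℂ) - 1‖ /
    Real.sqrt ((1 - ‖x‖ ^ 2) * (1 - ‖z‖ ^ 2)))

/-- The Busemann function of a boundary point `ξ` based at the origin. -/
def busemann (ξ z : EuclideanSpace ℂ (Fin 2)) : ℝ :=
  Real.log ((1 - ‖z‖ ^ 2) / ‖(inner ℂ z ξ : ℂ) - 1‖ ^ 2)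

theorem bergmanDist_boundary_asymptotic
    (x : ℕ → EuclideanSpace ℂ (Fin 2)) (ξ z : EuclideanSpace ℂ (Fin 2))
    (hx : ∀ n, ‖x n‖ < 1) (hξ : ‖ξ‖ = 1) (hz : ‖z‖ < 1)
    (hconv : Filter.Tendsto x Filter.atTop (nhds ξ)) :
    Filter.Tendsto (fun n => bergmanDist (x n) z + Real.log (1 - ‖x n‖ ^ 2))
      Filter.atTop (nhds (Real.log 4 - busemann ξ z)) := by
  have hu : 0 < 1 - ‖z‖ ^ 2 := by nlinarith [norm_nonneg z]
  set u : ℝ := 1 - ‖z‖ ^ 2 with hu_def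
  have hsu : 0 < Real.sqrt u := Real.sqrt_pos.mpr hu
  set c : ℝ := ‖(inner ℂ ξ z : ℂ) - 1‖ with hc_def
  have hc : 0 < c := by
    have h1 : ‖(inner ℂ ξ z : ℂ)‖ ≤ ‖ξ‖ * ‖z‖ := norm_inner_le_norm ξ z
    have h2 : ‖(1:ℂ)‖ - ‖(inner ℂ ξ z : ℂ)‖ ≤ ‖(1:ℂ) - (inner ℂ ξ z : ℂ)‖ :=
      norm_sub_norm_le _ _
    have h3 : ‖(1:ℂ) - (inner ℂ ξ z : ℂ)‖ = ‖(inner ℂ ξ z : ℂ) - 1‖ := norm_sub_rev _ _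
    have h4 : c = ‖(inner ℂ ξ z : ℂ) - 1‖ := rfl
    simp only [norm_one] at h2
    rw [hξ, one_mul] at h1
    rw [h4, ← h3]
    linarith
  set f : ℕ → ℝ := fun n => ‖(inner ℂ (x n) z : ℂ) - 1‖ with hf_def
  have hf : Filter.Tendsto f Filter.atTop (nhds c) := by
    have h1 : Filter.Tendsto (fun n => (inner ℂ (x n) z : ℂ)) Filter.atTop
        (nhds (inner ℂ ξ z)) := hconv.inner tendsto_const_nhds
    have h2 := h1.sub (tendsto_const_nhds (x := (1:ℂ)))
    exact (continuous_norm.tendsto _).comp h2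
  set t : ℕ → ℝ := fun n => 1 - ‖x n‖ ^ 2 with ht_def
  have htp : ∀ n, 0 < t n := by
    intro n
    have := hx n
    have h0 := norm_nonneg (x n)
    simp only [ht_def]
    nlinarith
  have hnorm : Filter.Tendsto (fun n => ‖x n‖) Filter.atTop (nhds 1) := by
    simpa [hξ] using hconv.norm
  have ht0 : Filter.Tendsto t Filter.atTop (nhds 0) := by
    have h := (tendsto_const_nhds (x := (1:ℝ))).sub (hnorm.pow 2)
    simpa using h
  have hfp : ∀ n, 0 < f n := by
    intro n
    have h1 : ‖(inner ℂ (x n) z : ℂ)‖ ≤ ‖x n‖ * ‖z‖ := norm_inner_le_norm _ _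
    have h2 : ‖(1:ℂ)‖ - ‖(inner ℂ (x n) z : ℂ)‖ ≤ ‖(1:ℂ) - (inner ℂ (x n) z : ℂ)‖ :=
      norm_sub_norm_le _ _
    have h3 : ‖(1:ℂ) - (inner ℂ (x n) z : ℂ)‖ = ‖(inner ℂ (x n) z : ℂ) - 1‖ := norm_sub_rev _ _
    have h4 : f n = ‖(inner ℂ (x n) z : ℂ) - 1‖ := rfl
    have h5 : ‖x n‖ * ‖z‖ < 1 := by
      nlinarith [hx n, hz, norm_nonneg (x n), norm_nonneg z]
    simp only [norm_one] at h2
    rw [h4, ← h3]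
    linarith
  set g : ℕ → ℝ := fun n => f n / Real.sqrt u + Real.sqrt ((f n) ^ 2 / u - t n) with hg_def
  have haux : Filter.Tendsto (fun n => (f n) ^ 2 / u - t n) Filter.atTop
      (nhds (c ^ 2 / u - 0)) := ((hf.pow 2).div_const u).sub ht0
  have hg : Filter.Tendsto g Filter.atTop (nhds (2 * c / Real.sqrt u)) := by
    have h2 := (hf.div_const (Real.sqrt u)).add haux.sqrt
    have h3 : c / Real.sqrt u + Real.sqrt (c ^ 2 / u - 0) = 2 * c / Real.sqrt u := by
      rw [sub_zero, Real.sqrt_div (sq_nonneg c) u, Real.sqrt_sq hc.le]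
      ring
    rw [h3] at h2
    exact h2
  have hpos : ∀ᶠ n in Filter.atTop, 0 < (f n) ^ 2 / u - t n := by
    have h2 : (0:ℝ) < c ^ 2 / u - 0 := by rw [sub_zero]; positivity
    exact haux.eventually (eventually_gt_nhds h2)
  have hcc : ‖(inner ℂ z ξ : ℂ) - 1‖ = c := by
    have h1 : ((inner ℂ z ξ : ℂ) - 1) = (starRingEnd ℂ) ((inner ℂ ξ z : ℂ) - 1) := by
      rw [map_sub, map_one, inner_conj_symm]
    rw [hc_def, h1, Complex.norm_conj]
  have hval : Real.log 4 - busemann ξ z = 2 * Real.log (2 * c / Real.sqrt u) := by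
    rw [busemann, hcc, ← hu_def]
    have e1 : 2 * Real.log (2 * c / Real.sqrt u)
        = Real.log ((2 * c / Real.sqrt u) ^ 2) := by
      rw [Real.log_pow]; norm_num
    have e2 : (2 * c / Real.sqrt u) ^ 2 = 4 * c ^ 2 / u := by
      rw [div_pow, Real.sq_sqrt hu.le]; ring
    rw [e1, e2, Real.log_div hu.ne' (by positivity : (c:ℝ) ^ 2 ≠ 0),
      Real.log_div (by positivity : (4 * c ^ 2 : ℝ) ≠ 0) hu.ne',
      Real.log_mul (by norm_num : (4:ℝ) ≠ 0) (by positivity : (c:ℝ) ^ 2 ≠ 0)]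
    ring
  have hev : ∀ᶠ n in Filter.atTop,
      bergmanDist (x n) z + Real.log (1 - ‖x n‖ ^ 2) = 2 * Real.log (g n) := by
    filter_upwards [hpos] with n hn
    have hT := htp n
    have ha := hfp n
    have hsT : 0 < Real.sqrt (t n) := Real.sqrt_pos.mpr hT
    have hstu : Real.sqrt (t n * u) = Real.sqrt (t n) * Real.sqrt u :=
      Real.sqrt_mul hT.le u
    have key : f n / Real.sqrt (t n * u)
        + Real.sqrt ((f n / Real.sqrt (t n * u)) ^ 2 - 1) = g n / Real.sqrt (t n) := by
      have h1 : (f n / Real.sqrt (t n * u)) ^ 2 = (f n) ^ 2 / (t n * u) := by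
        rw [div_pow, Real.sq_sqrt (by positivity)]
      have h2 : (f n) ^ 2 / (t n * u) - 1 = ((f n) ^ 2 / u - t n) / t n := by
        field_simp
      rw [h1, h2, Real.sqrt_div hn.le, hstu, hg_def]
      field_simp
    have hgpos : 0 < g n := by
      have h1 : 0 < f n / Real.sqrt u := by positivity
      have h2 : 0 ≤ Real.sqrt ((f n) ^ 2 / u - t n) := Real.sqrt_nonneg _
      simp only [hg_def]
      linarith
    have hB : bergmanDist (x n) z = 2 * Real.log (g n / Real.sqrt (t n)) := by
      rw [bergmanDist, arcosh, ← key]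
    rw [hB, Real.log_div hgpos.ne' hsT.ne', Real.log_sqrt hT.le,
      show (1 - ‖x n‖ ^ 2) = t n from rfl]
    ring
  have hmain : Filter.Tendsto (fun n => 2 * Real.log (g n)) Filter.atTop
      (nhds (2 * Real.log (2 * c / Real.sqrt u))) := by
    have h := ((Real.continuousAt_log (by positivity)).tendsto).comp hg
    exact h.const_mul 2
  rw [hval]
  exact Filter.Tendsto.congr' (Filter.EventuallyEq.symm hev) hmain

end
end

section
/- Let ξ ∈ ∂B and let (x_n) be a sequence in B converging in ℂ² to ξ. Then for all z, w ∈ B, the sequence d(x_n, z) − d(x_n, w) converges to B_ξ(w) − B_ξ(z). In particular (taking w = 0, for which B_ξ(0) = 0), the Busemann limit lim_{n→∞} (d(x_n, z) − d(x_n, 0)) exists and equals −B_ξ(z). -/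
noncomputable section

open Filter Real

lemma abs_inner_sub_one_pos {u v : EuclideanSpace ℂ (Fin 2)} (hu : ‖u‖ ≤ 1) (hv : ‖v‖ < 1) :
    0 < ‖(inner ℂ u v : ℂ) - 1‖ := by
  have h1 : ‖(inner ℂ u v : ℂ)‖ < 1 := by
    calc ‖(inner ℂ u v : ℂ)‖ ≤ ‖u‖ * ‖v‖ := norm_inner_le_norm u v
    _ ≤ 1 * ‖v‖ := by gcongr
    _ < 1 := by simpa using hv
  have h2 : ‖(1 : ℂ)‖ - ‖(inner ℂ u v : ℂ)‖ ≤ ‖(1 : ℂ) - (inner ℂ u v : ℂ)‖ :=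
    norm_sub_norm_le _ _
  rw [norm_sub_rev] at h2
  simp only [norm_one] at h2
  linarith

lemma sqrt_le_abs_inner {u v : EuclideanSpace ℂ (Fin 2)} (hu : ‖u‖ < 1) (hv : ‖v‖ < 1) :
    Real.sqrt ((1 - ‖u‖ ^ 2) * (1 - ‖v‖ ^ 2)) ≤ ‖(inner ℂ u v : ℂ) - 1‖ := by
  have hin : ‖(inner ℂ u v : ℂ)‖ ≤ ‖u‖ * ‖v‖ := norm_inner_le_norm u v
  have h2 : ‖(1 : ℂ)‖ - ‖(inner ℂ u v : ℂ)‖ ≤ ‖(1 : ℂ) - (inner ℂ u v : ℂ)‖ :=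
    norm_sub_norm_le _ _
  rw [norm_sub_rev] at h2
  simp only [norm_one] at h2
  have h3 : Real.sqrt ((1 - ‖u‖ ^ 2) * (1 - ‖v‖ ^ 2)) ≤ 1 - ‖u‖ * ‖v‖ := by
    rw [show (1 : ℝ) - ‖u‖ * ‖v‖ = Real.sqrt ((1 - ‖u‖ * ‖v‖) ^ 2) from
      (Real.sqrt_sq (by nlinarith [norm_nonneg u, norm_nonneg v])).symm]
    apply Real.sqrt_le_sqrt
    nlinarith [norm_nonneg u, norm_nonneg v, sq_nonneg (‖u‖ - ‖v‖)]
  linarith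

lemma bergman_eq {u v : EuclideanSpace ℂ (Fin 2)} (hu : ‖u‖ < 1) (hv : ‖v‖ < 1) :
    bergmanDist u v =
      2 * (Real.log (‖(inner ℂ u v : ℂ) - 1‖ / Real.sqrt (1 - ‖v‖ ^ 2)
          + Real.sqrt ((‖(inner ℂ u v : ℂ) - 1‖ / Real.sqrt (1 - ‖v‖ ^ 2)) ^ 2
            - Real.sqrt (1 - ‖u‖ ^ 2) ^ 2))
        - Real.log (Real.sqrt (1 - ‖u‖ ^ 2))) := by
  set N : ℝ := ‖(inner ℂ u v : ℂ) - 1‖ with hNdef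
  set t : ℝ := Real.sqrt (1 - ‖u‖ ^ 2) with htdef
  set sv : ℝ := Real.sqrt (1 - ‖v‖ ^ 2) with hsvdef
  have hu2 : (0:ℝ) < 1 - ‖u‖ ^ 2 := by nlinarith [norm_nonneg u]
  have hv2 : (0:ℝ) < 1 - ‖v‖ ^ 2 := by nlinarith [norm_nonneg v]
  have ht : 0 < t := Real.sqrt_pos.mpr hu2
  have hsv : 0 < sv := Real.sqrt_pos.mpr hv2
  have hN : 0 < N := abs_inner_sub_one_pos hu.le hv
  set a : ℝ := N / sv with hadef
  have ha : 0 < a := div_pos hN hsv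
  have hat : t ≤ a := by
    rw [hadef, le_div_iff₀ hsv]
    have := sqrt_le_abs_inner hu hv
    rwa [Real.sqrt_mul hu2.le, ← htdef, ← hsvdef, ← hNdef] at this
  have hat2 : (0:ℝ) ≤ a ^ 2 - t ^ 2 := by nlinarith
  have hdenom : Real.sqrt ((1 - ‖u‖ ^ 2) * (1 - ‖v‖ ^ 2)) = t * sv := by
    rw [Real.sqrt_mul hu2.le]
  rw [bergmanDist, hdenom]
  have hs : N / (t * sv) = a / t := by
    rw [hadef, div_div, mul_comm sv t]
  rw [hs, _root_.arcosh]
  congr 2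
  have h1 : (a / t) ^ 2 - 1 = (a ^ 2 - t ^ 2) / t ^ 2 := by
    field_simp
  rw [h1, Real.sqrt_div hat2, Real.sqrt_sq ht.le]
  rw [← add_div, Real.log_div (by positivity) ht.ne']

lemma tendsto_log_N (x : ℕ → EuclideanSpace ℂ (Fin 2)) (ξ v : EuclideanSpace ℂ (Fin 2))
    (hξ : ‖ξ‖ = 1) (hv : ‖v‖ < 1)
    (hconv : Filter.Tendsto x Filter.atTop (nhds ξ)) :
    Filter.Tendsto (fun n => Real.log
      (‖(inner ℂ (x n) v : ℂ) - 1‖ / Real.sqrt (1 - ‖v‖ ^ 2)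
        + Real.sqrt ((‖(inner ℂ (x n) v : ℂ) - 1‖ / Real.sqrt (1 - ‖v‖ ^ 2)) ^ 2
          - Real.sqrt (1 - ‖x n‖ ^ 2) ^ 2)))
      Filter.atTop
      (nhds (Real.log (2 * (‖(inner ℂ ξ v : ℂ) - 1‖ / Real.sqrt (1 - ‖v‖ ^ 2))))) := by
  have hv2 : (0:ℝ) < 1 - ‖v‖ ^ 2 := by nlinarith [norm_nonneg v]
  set A : ℝ := ‖(inner ℂ ξ v : ℂ) - 1‖ / Real.sqrt (1 - ‖v‖ ^ 2) with hAdef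
  have hA : 0 < A := div_pos (abs_inner_sub_one_pos hξ.le hv) (Real.sqrt_pos.mpr hv2)
  have h1 : Filter.Tendsto (fun n => (inner ℂ (x n) v : ℂ)) Filter.atTop (nhds (inner ℂ ξ v)) :=
    hconv.inner tendsto_const_nhds
  have h2 : Filter.Tendsto (fun n => ‖(inner ℂ (x n) v : ℂ) - 1‖) Filter.atTop
      (nhds (‖(inner ℂ ξ v : ℂ) - 1‖)) := by
    have := (continuous_norm.tendsto _).comp (h1.sub (tendsto_const_nhds (x := (1:ℂ))))
    simpa [Function.comp_def] using this
  have ha : Filter.Tendsto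
      (fun n => ‖(inner ℂ (x n) v : ℂ) - 1‖ / Real.sqrt (1 - ‖v‖ ^ 2))
      Filter.atTop (nhds A) := h2.div_const _
  have ht : Filter.Tendsto (fun n => Real.sqrt (1 - ‖x n‖ ^ 2)) Filter.atTop (nhds 0) := by
    have hnorm : Filter.Tendsto (fun n => ‖x n‖) Filter.atTop (nhds 1) := by
      have := hconv.norm; rwa [hξ] at this
    have h3 : Filter.Tendsto (fun n => 1 - ‖x n‖ ^ 2) Filter.atTop (nhds 0) := by
      have := (tendsto_const_nhds (x := (1:ℝ))).sub (hnorm.pow 2)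
      simpa using this
    have := (Real.continuous_sqrt.tendsto 0).comp h3
    simpa [Function.comp_def] using this
  have hinner : Filter.Tendsto
      (fun n => Real.sqrt ((‖(inner ℂ (x n) v : ℂ) - 1‖ / Real.sqrt (1 - ‖v‖ ^ 2)) ^ 2
        - Real.sqrt (1 - ‖x n‖ ^ 2) ^ 2)) Filter.atTop (nhds A) := by
    have h4 := (ha.pow 2).sub (ht.pow 2)
    have h5 := (Real.continuous_sqrt.tendsto _).comp h4
    simp only [Function.comp_def] at h5
    have : Real.sqrt (A ^ 2 - 0 ^ 2) = A := by
      rw [show A ^ 2 - 0 ^ 2 = A ^ 2 by ring, Real.sqrt_sq hA.le]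
    rwa [this] at h5
  have hsum := ha.add hinner
  have h2A : A + A = 2 * A := by ring
  rw [h2A] at hsum
  exact ((Real.continuousAt_log (by positivity)).tendsto).comp hsum

lemma key (x : ℕ → EuclideanSpace ℂ (Fin 2)) (ξ z w : EuclideanSpace ℂ (Fin 2))
    (hx : ∀ n, ‖x n‖ < 1) (hξ : ‖ξ‖ = 1) (hz : ‖z‖ < 1) (hw : ‖w‖ < 1)
    (hconv : Filter.Tendsto x Filter.atTop (nhds ξ)) :
    Filter.Tendsto (fun n => bergmanDist (x n) z - bergmanDist (x n) w)
      Filter.atTop (nhds (busemann ξ w - busemann ξ z)) := by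
  have habs : ∀ v : EuclideanSpace ℂ (Fin 2),
      ‖(inner ℂ v ξ : ℂ) - 1‖ = ‖(inner ℂ ξ v : ℂ) - 1‖ := by
    intro v
    rw [← Complex.norm_conj]
    congr 1
    rw [map_sub, map_one, inner_conj_symm]
  have hbus : ∀ v : EuclideanSpace ℂ (Fin 2), ‖v‖ < 1 →
      busemann ξ v = 2 * Real.log (Real.sqrt (1 - ‖v‖ ^ 2))
        - 2 * Real.log (‖(inner ℂ ξ v : ℂ) - 1‖) := by
    intro v hv
    have hv2 : (0:ℝ) < 1 - ‖v‖ ^ 2 := by nlinarith [norm_nonneg v]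
    have hD : 0 < ‖(inner ℂ ξ v : ℂ) - 1‖ := abs_inner_sub_one_pos hξ.le hv
    rw [busemann, habs v]
    set sv := Real.sqrt (1 - ‖v‖ ^ 2) with hsv
    rw [show (1 : ℝ) - ‖v‖ ^ 2 = sv ^ 2 from (Real.sq_sqrt hv2.le).symm,
      Real.log_div (by positivity) (by positivity), Real.log_pow, Real.log_pow]
    push_cast
    ring
  have heq : (fun n => bergmanDist (x n) z - bergmanDist (x n) w) =
      fun n => 2 * Real.log
        (‖(inner ℂ (x n) z : ℂ) - 1‖ / Real.sqrt (1 - ‖z‖ ^ 2)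
          + Real.sqrt ((‖(inner ℂ (x n) z : ℂ) - 1‖ / Real.sqrt (1 - ‖z‖ ^ 2)) ^ 2
            - Real.sqrt (1 - ‖x n‖ ^ 2) ^ 2))
        - 2 * Real.log
        (‖(inner ℂ (x n) w : ℂ) - 1‖ / Real.sqrt (1 - ‖w‖ ^ 2)
          + Real.sqrt ((‖(inner ℂ (x n) w : ℂ) - 1‖ / Real.sqrt (1 - ‖w‖ ^ 2)) ^ 2
            - Real.sqrt (1 - ‖x n‖ ^ 2) ^ 2)) := by
    funext n
    rw [bergman_eq (hx n) hz, bergman_eq (hx n) hw]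
    ring
  have hz2 : (0:ℝ) < 1 - ‖z‖ ^ 2 := by nlinarith [norm_nonneg z]
  have hw2 : (0:ℝ) < 1 - ‖w‖ ^ 2 := by nlinarith [norm_nonneg w]
  have hDz : 0 < ‖(inner ℂ ξ z : ℂ) - 1‖ := abs_inner_sub_one_pos hξ.le hz
  have hDw : 0 < ‖(inner ℂ ξ w : ℂ) - 1‖ := abs_inner_sub_one_pos hξ.le hw
  have hAz : 0 < ‖(inner ℂ ξ z : ℂ) - 1‖ / Real.sqrt (1 - ‖z‖ ^ 2) :=
    div_pos hDz (Real.sqrt_pos.mpr hz2)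
  have hAw : 0 < ‖(inner ℂ ξ w : ℂ) - 1‖ / Real.sqrt (1 - ‖w‖ ^ 2) :=
    div_pos hDw (Real.sqrt_pos.mpr hw2)
  have hfinal : busemann ξ w - busemann ξ z =
      2 * Real.log (2 * (‖(inner ℂ ξ z : ℂ) - 1‖ / Real.sqrt (1 - ‖z‖ ^ 2)))
      - 2 * Real.log (2 * (‖(inner ℂ ξ w : ℂ) - 1‖ / Real.sqrt (1 - ‖w‖ ^ 2))) := by
    rw [hbus z hz, hbus w hw, Real.log_mul two_ne_zero hAz.ne', Real.log_mul two_ne_zero hAw.ne',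
      Real.log_div hDz.ne' (Real.sqrt_pos.mpr hz2).ne', Real.log_div hDw.ne'
      (Real.sqrt_pos.mpr hw2).ne']
    ring
  rw [heq, hfinal]
  exact ((tendsto_log_N x ξ z hξ hz hconv).const_mul 2).sub
    ((tendsto_log_N x ξ w hξ hw hconv).const_mul 2)

theorem bergmanDist_sub_tendsto_busemann
    (x : ℕ → EuclideanSpace ℂ (Fin 2)) (ξ z w : EuclideanSpace ℂ (Fin 2))
    (hx : ∀ n, ‖x n‖ < 1) (hξ : ‖ξ‖ = 1) (hz : ‖z‖ < 1) (hw : ‖w‖ < 1)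
    (hconv : Filter.Tendsto x Filter.atTop (nhds ξ)) :
    Filter.Tendsto (fun n => bergmanDist (x n) z - bergmanDist (x n) w)
      Filter.atTop (nhds (busemann ξ w - busemann ξ z)) ∧
    Filter.Tendsto (fun n => bergmanDist (x n) z - bergmanDist (x n) 0)
      Filter.atTop (nhds (-(busemann ξ z))) := by
  refine ⟨key x ξ z w hx hξ hz hw hconv, ?_⟩
  have h0 : ‖(0 : EuclideanSpace ℂ (Fin 2))‖ < 1 := by simp
  have h := key x ξ z 0 hx hξ hz h0 hconv
  have hb0 : busemann ξ (0 : EuclideanSpace ℂ (Fin 2)) = 0 := by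
    simp [busemann]
  rw [hb0, zero_sub] at h
  exact h

end
end

section
/- Let z, w ∈ B, let ξ ∈ ∂B with B_ξ(z) < B_ξ(w), and let (x_n) be a sequence in B converging in ℂ² to ξ. Then d(x_n, z)² − d(x_n, w)² tends to +∞. -/
noncomputable section

open Filter Real

lemma arcosh_sub_log_tendsto :
    Tendsto (fun s : ℝ => _root_.arcosh s - Real.log s) atTop (nhds (Real.log 2)) := by
  have h0 : Tendsto (fun s : ℝ => 1 - 1 / s ^ 2) atTop (nhds 1) := by
    have h2 : Tendsto (fun s : ℝ => (s ^ 2)⁻¹) atTop (nhds 0) :=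
      (tendsto_pow_atTop (two_ne_zero)).inv_tendsto_atTop (α := ℝ)
    have h := (tendsto_const_nhds (x := (1:ℝ)) (f := atTop)).sub h2
    simpa [one_div] using h
  have h1 : Tendsto (fun s : ℝ => 1 + Real.sqrt (1 - 1 / s ^ 2)) atTop (nhds 2) := by
    have hs := (Real.continuous_sqrt.tendsto 1).comp h0
    have := (tendsto_const_nhds (x := (1:ℝ)) (f := atTop)).add hs
    norm_num at this
    convert this using 2
    norm_num
  have h2 := (Real.continuousAt_log (by norm_num : (2:ℝ) ≠ 0)).tendsto.comp h1
  apply h2.congr'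
  filter_upwards [eventually_ge_atTop 1] with s hs
  have hs0 : (0:ℝ) < s := lt_of_lt_of_le one_pos hs
  have hsq : (1:ℝ) ≤ s ^ 2 := by nlinarith
  have key : Real.sqrt (s ^ 2 - 1) / s = Real.sqrt (1 - 1 / s ^ 2) := by
    rw [show (1 - 1 / s ^ 2) = (s ^ 2 - 1) / s ^ 2 by field_simp]
    rw [Real.sqrt_div (by linarith : (0:ℝ) ≤ s ^ 2 - 1), Real.sqrt_sq hs0.le]
  have hpos : 0 < s + Real.sqrt (s ^ 2 - 1) := by positivity
  simp only [Function.comp]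
  rw [_root_.arcosh, ← Real.log_div hpos.ne' hs0.ne']
  congr 1
  rw [add_div, div_self hs0.ne', key]

lemma inner_abs_lt_one (p q : EuclideanSpace ℂ (Fin 2)) (hp : ‖p‖ ≤ 1) (hq : ‖q‖ < 1) :
    ‖(inner ℂ p q : ℂ)‖ < 1 := by
  calc ‖(inner ℂ p q : ℂ)‖ ≤ ‖p‖ * ‖q‖ := by
        exact norm_inner_le_norm p q
    _ ≤ 1 * ‖q‖ := by
        apply mul_le_mul_of_nonneg_right hp (norm_nonneg q)
    _ < 1 := by simpa using hq

lemma inner_sub_one_pos (p q : EuclideanSpace ℂ (Fin 2)) (hp : ‖p‖ ≤ 1) (hq : ‖q‖ < 1) :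
    0 < ‖(inner ℂ p q : ℂ) - 1‖ := by
  have := inner_abs_lt_one p q hp hq
  have hne : (inner ℂ p q : ℂ) ≠ 1 := by
    intro h; rw [h] at this; simp at this
  simpa using (norm_pos_iff.mpr (sub_ne_zero.mpr hne))

/-- key representation: bergmanDist (x n) p + log (1 - ‖x n‖²) converges. -/
lemma dist_rep (p : EuclideanSpace ℂ (Fin 2)) (hp : ‖p‖ < 1)
    (ξ : EuclideanSpace ℂ (Fin 2)) (hξ : ‖ξ‖ = 1)
    (x : ℕ → EuclideanSpace ℂ (Fin 2)) (hx : ∀ n, ‖x n‖ < 1)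
    (hconv : Tendsto x atTop (nhds ξ)) :
    Tendsto (fun n => bergmanDist (x n) p + Real.log (1 - ‖x n‖ ^ 2)) atTop
      (nhds (2 * Real.log 2 + 2 * Real.log (‖(inner ℂ ξ p : ℂ) - 1‖)
        - Real.log (1 - ‖p‖ ^ 2))) := by
  set c := 1 - ‖p‖ ^ 2 with hc
  have hc0 : 0 < c := by nlinarith [norm_nonneg p]
  set ε : ℕ → ℝ := fun n => 1 - ‖x n‖ ^ 2 with hεdef
  have hε0 : ∀ n, 0 < ε n := fun n => by
    have := hx n; show (0:ℝ) < 1 - ‖x n‖ ^ 2; nlinarith [norm_nonneg (x n)]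
  have hεlim : Tendsto ε atTop (nhds 0) := by
    have hn : Tendsto (fun n => ‖x n‖ ^ 2) atTop (nhds 1) := by
      have := (hconv.norm).pow 2
      rwa [hξ, one_pow] at this
    have := (tendsto_const_nhds (x := (1:ℝ)) (f := atTop)).sub hn
    simpa using this
  set a : ℕ → ℝ := fun n => ‖(inner ℂ (x n) p : ℂ) - 1‖ with hadef
  set A : ℝ := ‖(inner ℂ ξ p : ℂ) - 1‖ with hAdef
  have hA0 : 0 < A := inner_sub_one_pos ξ p (le_of_eq hξ) hp
  have ha0 : ∀ n, 0 < a n := fun n => inner_sub_one_pos (x n) p (hx n).le hp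
  have haA : Tendsto a atTop (nhds A) := by
    have hi : Tendsto (fun n => (inner ℂ (x n) p : ℂ)) atTop (nhds (inner ℂ ξ p : ℂ)) :=
      hconv.inner tendsto_const_nhds
    exact (continuous_norm.tendsto _).comp (hi.sub tendsto_const_nhds)
  set s : ℕ → ℝ := fun n => a n / Real.sqrt (ε n * c) with hsdef
  have hslim : Tendsto s atTop atTop := by
    have hd : Tendsto (fun n => Real.sqrt (ε n * c)) atTop (nhdsWithin 0 (Set.Ioi 0)) := by
      rw [tendsto_nhdsWithin_iff]
      constructor
      · have : Tendsto (fun n => ε n * c) atTop (nhds 0) := by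
          simpa using hεlim.mul_const c
        have := (Real.continuous_sqrt.tendsto 0).comp this
        simpa [Function.comp_def] using this
      · exact Filter.Eventually.of_forall fun n =>
          Real.sqrt_pos.mpr (mul_pos (hε0 n) hc0)
    have hinv := hd.inv_tendsto_nhdsGT_zero
    have := haA.pos_mul_atTop hA0 hinv
    apply this.congr
    intro n
    exact (div_eq_mul_inv _ _).symm
  have hber : ∀ n, bergmanDist (x n) p = 2 * _root_.arcosh (s n) := fun n => rfl
  have hlog : ∀ n, 2 * Real.log (s n) + Real.log (ε n) = 2 * Real.log (a n) - Real.log c := by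
    intro n
    have h1 : Real.log (s n) = Real.log (a n) - (Real.log (ε n) + Real.log c) / 2 := by
      rw [hsdef]
      simp only
      rw [Real.log_div (ha0 n).ne' (Real.sqrt_pos.mpr (mul_pos (hε0 n) hc0)).ne',
        Real.log_sqrt (mul_pos (hε0 n) hc0).le, Real.log_mul (hε0 n).ne' hc0.ne']
    rw [h1]; ring
  have hεlog : Tendsto (fun n => Real.log (a n)) atTop (nhds (Real.log A)) :=
    (Real.continuousAt_log hA0.ne').tendsto.comp haA
  have hcorr : Tendsto (fun n => _root_.arcosh (s n) - Real.log (s n)) atTop (nhds (Real.log 2)) :=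
    arcosh_sub_log_tendsto.comp hslim
  have heq : ∀ n, bergmanDist (x n) p + Real.log (ε n)
      = 2 * (_root_.arcosh (s n) - Real.log (s n)) + (2 * Real.log (a n) - Real.log c) := by
    intro n
    rw [← hlog n, hber n]; ring
  have : Tendsto (fun n => 2 * (_root_.arcosh (s n) - Real.log (s n)) + (2 * Real.log (a n) - Real.log c))
      atTop (nhds (2 * Real.log 2 + (2 * Real.log A - Real.log c))) :=
    ((hcorr.const_mul 2).add ((hεlog.const_mul 2).sub tendsto_const_nhds))
  have h := this.congr (fun n => (heq n).symm)
  convert h using 2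
  ring

theorem sq_dist_diff_tendsto_atTop_of_busemann_lt
    (z w : EuclideanSpace ℂ (Fin 2)) (hz : ‖z‖ < 1) (hw : ‖w‖ < 1)
    (ξ : EuclideanSpace ℂ (Fin 2)) (hξ : ‖ξ‖ = 1)
    (hlt : busemann ξ z < busemann ξ w)
    (x : ℕ → EuclideanSpace ℂ (Fin 2)) (hx : ∀ n, ‖x n‖ < 1)
    (hconv : Filter.Tendsto x Filter.atTop (nhds ξ)) :
    Filter.Tendsto (fun n => bergmanDist (x n) z ^ 2 - bergmanDist (x n) w ^ 2)
      Filter.atTop Filter.atTop := by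
  have hz' := dist_rep z hz ξ hξ x hx hconv
  have hw' := dist_rep w hw ξ hξ x hx hconv
  set L := (2 * Real.log 2 + 2 * Real.log (‖(inner ℂ ξ z : ℂ) - 1‖)
        - Real.log (1 - ‖z‖ ^ 2))
      - (2 * Real.log 2 + 2 * Real.log (‖(inner ℂ ξ w : ℂ) - 1‖)
        - Real.log (1 - ‖w‖ ^ 2)) with hL
  -- difference tends to L
  have hdiff : Filter.Tendsto (fun n => bergmanDist (x n) z - bergmanDist (x n) w)
      Filter.atTop (nhds L) := by
    have := hz'.sub hw'
    apply this.congr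
    intro n; ring
  -- L = busemann ξ w - busemann ξ z > 0
  have habs : ∀ p : EuclideanSpace ℂ (Fin 2),
      ‖(inner ℂ p ξ : ℂ) - 1‖ = ‖(inner ℂ ξ p : ℂ) - 1‖ := by
    intro p
    have h : (inner ℂ p ξ : ℂ) - 1 = (starRingEnd ℂ) ((inner ℂ ξ p : ℂ) - 1) := by
      rw [map_sub, map_one, inner_conj_symm]
    rw [h, Complex.norm_conj]
  have hbus : ∀ (p : EuclideanSpace ℂ (Fin 2)), ‖p‖ < 1 →
      busemann ξ p = Real.log (1 - ‖p‖ ^ 2)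
        - 2 * Real.log (‖(inner ℂ ξ p : ℂ) - 1‖) := by
    intro p hp
    have h1 : 0 < 1 - ‖p‖ ^ 2 := by nlinarith [norm_nonneg p]
    have h2 : 0 < ‖(inner ℂ p ξ : ℂ) - 1‖ := by
      rw [habs p]; exact inner_sub_one_pos ξ p (le_of_eq hξ) hp
    rw [busemann, Real.log_div h1.ne' (by positivity), Real.log_pow, habs p]
    push_cast; ring
  have hL0 : 0 < L := by
    have hzb := hbus z hz
    have hwb := hbus w hw
    rw [hL]
    have : L = busemann ξ w - busemann ξ z := by rw [hL, hzb, hwb]; ring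
    rw [← hL]
    rw [this]; linarith
  -- bergmanDist (x n) w → atTop
  have hεbot : Filter.Tendsto (fun n => Real.log (1 - ‖x n‖ ^ 2)) Filter.atTop Filter.atBot := by
    have hεlim : Filter.Tendsto (fun n => 1 - ‖x n‖ ^ 2) Filter.atTop
        (nhdsWithin 0 (Set.Ioi 0)) := by
      rw [tendsto_nhdsWithin_iff]
      constructor
      · have hn : Filter.Tendsto (fun n => ‖x n‖ ^ 2) Filter.atTop (nhds 1) := by
          have := (hconv.norm).pow 2
          rwa [hξ, one_pow] at this
        have := (tendsto_const_nhds (x := (1:ℝ)) (f := atTop)).sub hn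
        simpa using this
      · exact Filter.Eventually.of_forall fun n => by
          have := hx n; simp only [Set.mem_Ioi]; nlinarith [norm_nonneg (x n)]
    exact Real.tendsto_log_nhdsGT_zero.comp hεlim
  have hwtop : Filter.Tendsto (fun n => bergmanDist (x n) w) Filter.atTop Filter.atTop := by
    have hneg : Filter.Tendsto (fun n => -Real.log (1 - ‖x n‖ ^ 2)) Filter.atTop Filter.atTop :=
      Filter.tendsto_neg_atBot_atTop.comp hεbot
    have := hw'.add_atTop hneg
    apply this.congr
    intro n; ring
  have hsum : Filter.Tendsto (fun n => bergmanDist (x n) z + bergmanDist (x n) w)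
      Filter.atTop Filter.atTop := by
    have := hdiff.add_atTop ((hwtop.const_mul_atTop two_pos))
    apply this.congr
    intro n; ring
  have := hdiff.pos_mul_atTop hL0 hsum
  apply this.congr
  intro n; ring

end
end

section
/- Let α, β ≥ 0 with (α,β) ≠ (0,0), and for u ∈ ℝ set P(u) := ((tanh(α·u), 0), (tanh(β·u), 0)) ∈ B × B. Then for all real numbers u₋ < u₀ < u₊ there is no point (x,y) ∈ B × B with ρ((x,y), P(u₋)) = ρ((x,y), P(u₀)) = ρ((x,y), P(u₊)); equivalently, the bisectors E(P(u₀), P(u₊)) and E(P(u₀), P(u₋)) are disjoint. (This is the disjointness E(z, γ(z)) ∩ E(z, γ⁻¹(z)) = ∅ of the main theorem in normalized coordinates, where γ = (g₁, g₂) is a pair of loxodromic isometries of H²_ℂ translating along the real axes with translation parameters α, β and z = P(u₀) lies on the invariant axes.) -/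
set_option maxHeartbeats 1600000

noncomputable section

/-- The point `(t, 0)` of the invariant axis, as an element of `ℂ²`. -/
def axisPt (t : ℝ) : EuclideanSpace ℂ (Fin 2) := WithLp.toLp 2 ![(t : ℂ), 0]

/-- The `L²` product distance on the complex bidisk `B × B`. -/
def prodDist (a b : EuclideanSpace ℂ (Fin 2) × EuclideanSpace ℂ (Fin 2)) : ℝ :=
  Real.sqrt (bergmanDist a.1 b.1 ^ 2 + bergmanDist a.2 b.2 ^ 2)

/-- The orbit point `P(u) = ((tanh(αu), 0), (tanh(βu), 0))` on the invariant flat. -/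
def orbitPt (α β u : ℝ) : EuclideanSpace ℂ (Fin 2) × EuclideanSpace ℂ (Fin 2) :=
  (axisPt (Real.tanh (α * u)), axisPt (Real.tanh (β * u)))

/-! ### Auxiliary lemmas -/

lemma cosh_arcosh {s : ℝ} (hs : 1 ≤ s) : Real.cosh (arcosh s) = s := by
  have h1 : 0 ≤ s ^ 2 - 1 := by nlinarith
  have h3 : 0 < s + Real.sqrt (s ^ 2 - 1) := by positivity
  rw [arcosh, Real.cosh_eq, Real.exp_log h3, Real.exp_neg, Real.exp_log h3]
  have h2 : Real.sqrt (s ^ 2 - 1) ^ 2 = s ^ 2 - 1 := Real.sq_sqrt h1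
  have h4 : s + Real.sqrt (s ^ 2 - 1) ≠ 0 := ne_of_gt h3
  field_simp
  nlinarith [Real.sqrt_nonneg (s^2-1)]

lemma arcosh_nonneg {s : ℝ} (hs : 1 ≤ s) : 0 ≤ arcosh s := by
  apply Real.log_nonneg
  have := Real.sqrt_nonneg (s ^ 2 - 1)
  linarith

lemma arcosh_cosh {t : ℝ} (ht : 0 ≤ t) : arcosh (Real.cosh t) = t := by
  have h1 : Real.cosh t ^ 2 - 1 = Real.sinh t ^ 2 := by
    have := Real.cosh_sq_sub_sinh_sq t; linarith
  have h2 : 0 ≤ Real.sinh t := Real.sinh_nonneg_iff.2 ht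
  rw [arcosh, h1, Real.sqrt_sq h2, Real.cosh_add_sinh, Real.log_exp]

lemma norm_sq_decomp (x : EuclideanSpace ℂ (Fin 2)) :
    ‖x‖ ^ 2 = ((x 0).re ^ 2 + (x 0).im ^ 2) + ‖x 1‖ ^ 2 := by
  rw [EuclideanSpace.norm_eq, Real.sq_sqrt (by positivity)]
  rw [Fin.sum_univ_two]
  rw [Complex.sq_norm, Complex.normSq_apply]
  ring

lemma norm_sq_axisPt (t : ℝ) : ‖axisPt t‖ ^ 2 = t ^ 2 := by
  rw [EuclideanSpace.norm_eq, Real.sq_sqrt (by positivity)]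
  simp [axisPt, Fin.sum_univ_two]

lemma inner_axisPt (x : EuclideanSpace ℂ (Fin 2)) (t : ℝ) :
    (inner ℂ x (axisPt t) : ℂ) = (starRingEnd ℂ) (x 0) * t := by
  simp [axisPt, PiLp.inner_apply, Fin.sum_univ_two, RCLike.inner_apply]; ring

private lemma aux_sq_le {d n : ℝ} (h : d ^ 2 ≤ n ^ 2) (hd : 0 ≤ d) (hn : 0 ≤ n) :
    d ≤ n := by nlinarith

private lemma aux_num_ge {p q w t N : ℝ} (hw0 : 0 ≤ w)
    (hN : N = 1 - (p ^ 2 + q ^ 2) - w) (ht : t ^ 2 ≤ 1) :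
    N * (1 - t ^ 2) ≤ (p * t - 1) ^ 2 + (q * t) ^ 2 := by
  nlinarith [sq_nonneg (t - p), sq_nonneg q, mul_nonneg hw0 (sub_nonneg.2 ht)]

private lemma aux_one_minus_t_pos {t c : ℝ} (h : (1 - t ^ 2) * c ^ 2 = 1)
    (hc : 0 < c) : 0 < 1 - t ^ 2 := by nlinarith

/-- For `x` in the open ball, the hyperbolic cosine of the Bergman distance from `x` to
the point `(tanh s, 0)` of the real axis is `K cosh (2s − θ) + L`. -/
lemma factor_formula (x : EuclideanSpace ℂ (Fin 2)) (hx : ‖x‖ < 1) :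
    ∃ K L θ : ℝ, 0 < K ∧ 0 ≤ L ∧ 1 ≤ K + L ∧ ∀ s : ℝ,
      0 ≤ bergmanDist x (axisPt (Real.tanh s)) ∧
      Real.cosh (bergmanDist x (axisPt (Real.tanh s)))
        = K * Real.cosh (2 * s - θ) + L := by
  set p := (x 0).re with hp
  set q := (x 0).im with hq
  set w := ‖x 1‖ ^ 2 with hw
  have hw0 : 0 ≤ w := sq_nonneg _
  have hx2 : ‖x‖ ^ 2 < 1 := by
    have := pow_lt_one₀ (norm_nonneg x) hx (two_ne_zero)
    simpa using this
  have hnormx : ‖x‖ ^ 2 = (p ^ 2 + q ^ 2) + w := norm_sq_decomp x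
  set N := 1 - ‖x‖ ^ 2 with hN
  have hNval : N = 1 - (p ^ 2 + q ^ 2) - w := by rw [hN, hnormx]; ring
  have hN0 : 0 < N := by rw [hN]; linarith
  have hr1 : p ^ 2 + q ^ 2 + w < 1 := by rw [hnormx] at hx2; linarith
  have hrlt : p ^ 2 + q ^ 2 < 1 := by linarith
  set a := 1 + (p ^ 2 + q ^ 2) with ha
  set b := 2 * p with hb
  have habval : a ^ 2 - b ^ 2 = (1 - (p ^ 2 + q ^ 2)) ^ 2 + 4 * q ^ 2 := by
    rw [ha, hb]; ring
  have hab : 0 < a ^ 2 - b ^ 2 := by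
    rw [habval]
    have h1 : 0 < 1 - (p ^ 2 + q ^ 2) := by linarith
    positivity
  set R := Real.sqrt (a ^ 2 - b ^ 2) with hR
  have hR0 : 0 < R := Real.sqrt_pos.2 hab
  have hR2 : R ^ 2 = a ^ 2 - b ^ 2 := Real.sq_sqrt (le_of_lt hab)
  have ha0 : 0 < a := by rw [ha]; positivity
  set θ := Real.arsinh (b / R) with hθ
  have hsinhθ : Real.sinh θ = b / R := Real.sinh_arsinh _
  have hcoshθ : Real.cosh θ = a / R := by
    rw [hθ, Real.cosh_arsinh]
    rw [show 1 + (b / R) ^ 2 = (a / R) ^ 2 by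
      field_simp; linear_combination hR2]
    exact Real.sqrt_sq (by positivity)
  refine ⟨R / N, w / N, θ, by positivity, by positivity, ?_, ?_⟩
  · rw [← add_div, le_div_iff₀ hN0, one_mul]
    have h2 : 1 - (p ^ 2 + q ^ 2) ≤ R := by
      calc 1 - (p^2+q^2) = Real.sqrt ((1 - (p^2+q^2))^2) :=
            (Real.sqrt_sq (by linarith)).symm
        _ ≤ R := Real.sqrt_le_sqrt (by rw [habval]; nlinarith [sq_nonneg q])
    rw [hNval]; linarith
  intro s
  set ch := Real.cosh s with hch
  set sh := Real.sinh s with hsh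
  have hch0 : 0 < ch := Real.cosh_pos s
  have hpyth : ch ^ 2 - sh ^ 2 = 1 := Real.cosh_sq_sub_sinh_sq s
  set t := Real.tanh s with htdef
  have htch : t * ch = sh := by
    rw [htdef, Real.tanh_eq_sinh_div_cosh]; field_simp; rw [hch, hsh]; ring
  have h1t : (1 - t ^ 2) * ch ^ 2 = 1 := by
    linear_combination hpyth - (t * ch + sh) * htch
  have h1tpos : 0 < 1 - t ^ 2 := aux_one_minus_t_pos h1t hch0
  set ζ := (starRingEnd ℂ) (x 0) * (t : ℂ) - 1 with hζ
  have hζre : ζ.re = p * t - 1 := by simp [hζ, hp]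
  have hζim : ζ.im = -(q * t) := by simp [hζ, hq]
  set num := ‖ζ‖ with hnum
  have hnum0 : 0 ≤ num := norm_nonneg _
  have hnum2 : num ^ 2 = (p * t - 1) ^ 2 + (q * t) ^ 2 := by
    rw [hnum, Complex.sq_norm, Complex.normSq_apply, hζre, hζim]; ring
  set den := Real.sqrt (N * (1 - t ^ 2)) with hden
  have hden0 : 0 < den := Real.sqrt_pos.2 (by positivity)
  have hden2 : den ^ 2 = N * (1 - t ^ 2) := Real.sq_sqrt (by positivity)
  have hA1 : 1 ≤ num / den := by
    rw [le_div_iff₀ hden0, one_mul]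
    refine aux_sq_le ?_ hden0.le hnum0
    rw [hden2, hnum2]
    exact aux_num_ge hw0 hNval (by linarith)
  have hbd : bergmanDist x (axisPt t) = 2 * arcosh (num / den) := by
    rw [bergmanDist, inner_axisPt, norm_sq_axisPt]
  constructor
  · rw [hbd]
    have := arcosh_nonneg hA1
    linarith
  · rw [hbd]
    have hcosh2 : Real.cosh (2 * arcosh (num / den)) = 2 * (num / den) ^ 2 - 1 := by
      rw [Real.cosh_two_mul, Real.sinh_sq, cosh_arcosh hA1]
      ring
    rw [hcosh2]
    have hc2s : R / N * Real.cosh (2 * s - θ) + w / N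
        = ((Real.cosh (2*s) * a - Real.sinh (2*s) * b) + w) / N := by
      rw [Real.cosh_sub, hcoshθ, hsinhθ]
      field_simp
    rw [hc2s]
    rw [eq_div_iff (ne_of_gt hN0)]
    have hA2 : (num / den) ^ 2 * N = num ^ 2 * ch ^ 2 := by
      rw [div_pow, hden2]
      field_simp
      linear_combination (-num ^ 2) * h1t
    have hc2 : Real.cosh (2*s) = ch ^ 2 + sh ^ 2 := Real.cosh_two_mul s
    have hs2 : Real.sinh (2*s) = 2 * sh * ch := Real.sinh_two_mul s
    rw [hc2, hs2]
    calc (2 * (num / den) ^ 2 - 1) * N = 2 * ((num / den) ^ 2 * N) - N := by ring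
      _ = 2 * (num ^ 2 * ch ^ 2) - N := by rw [hA2]
      _ = (ch ^ 2 + sh ^ 2) * a - 2 * sh * ch * b + w := by
          rw [hnum2, hNval, ha, hb]
          linear_combination (2*(p^2+q^2)*(t*ch+sh) - 4*p*ch) * htch + (1-p^2-q^2) * hpyth

/-! ### The key polynomial inequality -/

lemma master {K L M : ℝ} (hK : 0 < K) (hL : 0 ≤ L) (hKL : 1 ≤ K + L)
    (hM : 1 ≤ M) (hU : K*M+L ≤ M) :
    (K*M+L)^2 + M^2 + (K*M+L)*(M^2-(K*M+L)^2) ≤ 2*(K*M+L)*M*(L*M+K) := by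
  nlinarith [mul_nonneg (mul_nonneg hK.le hL) (sq_nonneg (M-1)),
    mul_nonneg (sub_nonneg.2 hKL) (sq_nonneg (M-1)),
    mul_nonneg (sub_nonneg.2 hU) (sub_nonneg.2 hM),
    sq_nonneg (M - (K*M+L)), sq_nonneg (K+L-1), sq_nonneg (M-1),
    mul_nonneg (sub_nonneg.2 hU) (sub_nonneg.2 hKL),
    mul_nonneg (mul_nonneg (sub_nonneg.2 hU) (sub_nonneg.2 hM)) hL,
    mul_nonneg (mul_nonneg (sub_nonneg.2 hU) (sub_nonneg.2 hM)) hK.le,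
    mul_pos hK (lt_of_lt_of_le one_pos hM)]

lemma key_poly {K L M X : ℝ} (hK : 0 < K) (hL : 0 ≤ L) (hKL : 1 ≤ K + L)
    (hM : 1 ≤ M) (hX : 1 ≤ X)
    (hC : K^2*(M^2+X^2-1) + 2*K*L*M*X + L^2 + 1 ≤ 2*(K*M+L)^2) :
    (K*M*X+L)^2 ≤ (K*M+L)^2 * (K^2*(X^2-1) + 2*K*L*M*(X-1) + 1) := by
  set U := K*M+L with hU
  set V := L*M+K with hV
  have hU1 : 1 ≤ U := by rw [hU]; nlinarith
  have hV1 : 1 ≤ V := by rw [hV]; nlinarith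
  have hbracket : 0 ≤ U^2*K*(X+1) + 2*U^2*L*M - 2*U*M - K*M^2*(X-1) := by
    rcases le_total M U with hUM | hUM
    · -- M ≤ U : coefficient of X is nonneg
      have hUVM : M ≤ U * V := by
        have : U * V = M*(K+L)^2 + K*L*(M-1)^2 := by rw [hU, hV]; ring
        nlinarith [mul_nonneg (mul_nonneg hK.le hL) (sq_nonneg (M-1))]
      nlinarith [mul_nonneg (mul_nonneg hK.le (sub_nonneg.2 hX))
          (mul_nonneg (sub_nonneg.2 hUM) (by nlinarith : (0:ℝ) ≤ U + M)),
        mul_nonneg (by nlinarith : (0:ℝ) ≤ U) (sub_nonneg.2 hUVM)]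
    · -- U ≤ M
      set Y := K*X + L*M with hY
      set c := M^2 - U^2 with hc
      have hc0 : 0 ≤ c := by nlinarith
      have hY0 : 0 ≤ Y := by rw [hY]; nlinarith
      have hYS : Y^2 ≤ U^2 + V^2 - 1 := by rw [hY, hU, hV]; nlinarith [hC]
      have hYUV : Y ≤ U*V := by
        refine aux_sq_le ?_ hY0 (by nlinarith)
        nlinarith [mul_nonneg (by nlinarith : (0:ℝ) ≤ U^2-1) (by nlinarith : (0:ℝ) ≤ V^2-1)]
      have hUM' : K*M+L ≤ M := by rw [hU] at hUM; exact hUM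
      have hmaster : U^2 + M^2 + U*c ≤ 2*U*M*V := by
        rw [hc, hU, hV]; exact master hK hL hKL hM hUM'
      have hVAB : 0 ≤ V*(U^2+M^2) - 2*U*M := by nlinarith
      have hD : (V*(U^2+M^2) - 2*U*M)^2 - (U^2+V^2-1)*c^2
          = (2*U*M*V - (U^2+M^2))^2 - U^2*c^2 := by rw [hc]; ring
      have hYc : Y*c ≤ V*(U^2+M^2) - 2*U*M := by
        refine aux_sq_le ?_ (mul_nonneg hY0 hc0) hVAB
        have h1 : U^2*c^2 ≤ (2*U*M*V - (U^2+M^2))^2 := by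
          have h2 : 0 ≤ U*c := mul_nonneg (by nlinarith) hc0
          nlinarith [hmaster]
        nlinarith [mul_le_mul_of_nonneg_right hYS (sq_nonneg c)]
      have hid : U^2*K*(X+1) + 2*U^2*L*M - 2*U*M - K*M^2*(X-1)
          = (V*(U^2+M^2) - 2*U*M) - Y*c := by rw [hY, hc, hU, hV]; ring
      rw [hid]; linarith
  rw [hU] at hbracket ⊢
  nlinarith [mul_nonneg (mul_nonneg hK.le (sub_nonneg.2 hX)) hbracket]

/-! ### Midpoint convexity of the squared distance along the orbit -/

lemma sum_to_prod (s t : ℝ) :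
    Real.cosh s + Real.cosh t = 2 * Real.cosh ((s+t)/2) * Real.cosh ((s-t)/2) ∧
    Real.cosh s * Real.cosh t
      = Real.cosh ((s+t)/2)^2 + Real.cosh ((s-t)/2)^2 - 1 := by
  have h1 := Real.cosh_add ((s+t)/2) ((s-t)/2)
  have h2 := Real.cosh_sub ((s+t)/2) ((s-t)/2)
  rw [show (s+t)/2 + (s-t)/2 = s by ring] at h1
  rw [show (s+t)/2 - (s-t)/2 = t by ring] at h2
  have hSm := Real.sinh_sq ((s+t)/2)
  have hSe := Real.sinh_sq ((s-t)/2)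
  constructor
  · linarith
  · rw [h1, h2]
    linear_combination (-(Real.sinh ((s-t)/2)^2)) * hSm + (-(Real.cosh ((s+t)/2)^2 - 1)) * hSe

section Psi
variable {K L θ c : ℝ} {ψ : ℝ → ℝ}

lemma psi_midpoint (hK : 0 < K) (hL : 0 ≤ L) (hKL : 1 ≤ K + L)
    (hψ0 : ∀ u, 0 ≤ ψ u)
    (hψ : ∀ u, Real.cosh (ψ u) = K * Real.cosh (c*u - θ) + L)
    (p q : ℝ) : ψ ((p+q)/2) ≤ (ψ p + ψ q) / 2 := by
  set s := c*p - θ with hs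
  set t := c*q - θ with ht
  set a := ψ p with haa
  set b := ψ q with hbb
  have ha0 : 0 ≤ a := hψ0 p
  have hb0 : 0 ≤ b := hψ0 q
  have hca : Real.cosh a = K * Real.cosh s + L := hψ p
  have hcb : Real.cosh b = K * Real.cosh t + L := hψ q
  have hcm : Real.cosh (ψ ((p+q)/2)) = K * Real.cosh ((s+t)/2) + L := by
    rw [hψ ((p+q)/2), show c*((p+q)/2) - θ = (s+t)/2 by rw [hs, ht]; ring]
  set M := Real.cosh ((s+t)/2) with hM
  set X := Real.cosh ((s-t)/2) with hX
  have hM1 : 1 ≤ M := Real.one_le_cosh _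
  have hX1 : 1 ≤ X := Real.one_le_cosh _
  obtain ⟨hsum, hprod⟩ := sum_to_prod s t
  have hP : Real.cosh a * Real.cosh b
      = K^2*(M^2+X^2-1) + 2*K*L*M*X + L^2 := by
    rw [hca, hcb]; linear_combination K^2 * hprod + K*L*hsum
  have hsab : 0 ≤ Real.sinh a * Real.sinh b :=
    mul_nonneg (Real.sinh_nonneg_iff.2 ha0) (Real.sinh_nonneg_iff.2 hb0)
  have hkey : (K*M+L)^2 ≤ (Real.cosh a * Real.cosh b + Real.sinh a * Real.sinh b + 1)/2 := by
    rcases le_or_gt (2*(K*M+L)^2) (Real.cosh a * Real.cosh b + 1) with hcase | hcase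
    · linarith
    · have hC : K^2*(M^2+X^2-1) + 2*K*L*M*X + L^2 + 1 ≤ 2*(K*M+L)^2 := by
        rw [hP] at hcase; linarith
      have hkp := key_poly hK hL hKL hM1 hX1 hC
      have hsum_ab : Real.cosh a + Real.cosh b = 2*(K*M*X+L) := by
        rw [hca, hcb]; linear_combination K * hsum
      have hW : 0 < 2*(K*M+L)^2 - (Real.cosh a * Real.cosh b + 1) := by linarith
      have hD : (Real.sinh a * Real.sinh b)^2
          = (Real.cosh a * Real.cosh b + 1)^2 - (Real.cosh a + Real.cosh b)^2 := by
        have h1 := Real.sinh_sq a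
        have h2 := Real.sinh_sq b
        linear_combination (Real.sinh b^2) * h1 + (Real.cosh a^2 - 1) * h2
      have hge : (2*(K*M+L)^2 - (Real.cosh a * Real.cosh b + 1))^2
          ≤ (Real.sinh a * Real.sinh b)^2 := by
        rw [hD, hsum_ab, hP]
        linear_combination 4 * hkp
      have := aux_sq_le hge (le_of_lt hW) hsab
      linarith
  have hchm2 : Real.cosh ((a+b)/2)^2
      = (Real.cosh a * Real.cosh b + Real.sinh a * Real.sinh b + 1)/2 := by
    have h1 := Real.cosh_two_mul ((a+b)/2)
    rw [show 2*((a+b)/2) = a + b by ring, Real.cosh_add] at h1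
    have h2 := Real.sinh_sq ((a+b)/2)
    linarith
  have hccle : Real.cosh (ψ ((p+q)/2)) ≤ Real.cosh ((a+b)/2) := by
    refine aux_sq_le ?_ (le_of_lt (Real.cosh_pos _)) (le_of_lt (Real.cosh_pos _))
    rw [hchm2, hcm]
    exact hkey
  have habs := Real.cosh_le_cosh.mp hccle
  rwa [abs_of_nonneg (hψ0 _), abs_of_nonneg (by linarith : (0:ℝ) ≤ (a+b)/2)] at habs

lemma psi_sq_midpoint (hK : 0 < K) (hL : 0 ≤ L) (hKL : 1 ≤ K + L)
    (hψ0 : ∀ u, 0 ≤ ψ u)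
    (hψ : ∀ u, Real.cosh (ψ u) = K * Real.cosh (c*u - θ) + L)
    (p q : ℝ) : ψ ((p+q)/2)^2 ≤ (ψ p^2 + ψ q^2) / 2 := by
  have h := psi_midpoint hK hL hKL hψ0 hψ p q
  nlinarith [hψ0 ((p+q)/2), hψ0 p, hψ0 q, sq_nonneg (ψ p - ψ q)]

lemma psi_strict_mid (hK : 0 < K) (hL : 0 ≤ L) (hKL : 1 ≤ K + L)
    (hψ0 : ∀ u, 0 ≤ ψ u)
    (hψ : ∀ u, Real.cosh (ψ u) = K * Real.cosh (c*u - θ) + L)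
    (hc : c ≠ 0) {p q : ℝ} (hpq : p ≠ q) :
    ψ ((p+q)/2)^2 < (ψ p^2 + ψ q^2) / 2 := by
  have hmid := psi_midpoint hK hL hKL hψ0 hψ p q
  set s := c*p - θ with hs
  set t := c*q - θ with ht
  have hca : Real.cosh (ψ p) = K * Real.cosh s + L := hψ p
  have hcb : Real.cosh (ψ q) = K * Real.cosh t + L := hψ q
  have hcm : Real.cosh (ψ ((p+q)/2)) = K * Real.cosh ((s+t)/2) + L := by
    rw [hψ ((p+q)/2), show c*((p+q)/2) - θ = (s+t)/2 by rw [hs, ht]; ring]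
  obtain ⟨hsum, -⟩ := sum_to_prod s t
  have hst : s ≠ t := by
    rw [hs, ht]; intro h
    exact hpq (by
      have : c * p = c * q := by linarith [h]
      exact mul_left_cancel₀ hc this)
  have hX1 : 1 < Real.cosh ((s-t)/2) := by
    apply Real.one_lt_cosh.2
    intro h
    apply hst
    have : s - t = 0 := by linarith
    linarith
  have hstrict : Real.cosh (ψ ((p+q)/2)) < (Real.cosh (ψ p) + Real.cosh (ψ q))/2 := by
    rw [hcm, hca, hcb]
    have hM0 : 0 < Real.cosh ((s+t)/2) := Real.cosh_pos _
    nlinarith [hsum, mul_pos (mul_pos hK hM0) (sub_pos.2 hX1)]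
  by_cases hab : ψ p = ψ q
  · have hlt : Real.cosh (ψ ((p+q)/2)) < Real.cosh (ψ p) := by rw [hab] at hstrict ⊢; linarith
    have := Real.cosh_lt_cosh.mp hlt
    rw [abs_of_nonneg (hψ0 _), abs_of_nonneg (hψ0 _)] at this
    have h2 : ψ ((p+q)/2)^2 < ψ p^2 := by nlinarith [hψ0 ((p+q)/2)]
    rw [← hab]; linarith
  · have h1 : ψ ((p+q)/2)^2 ≤ ((ψ p + ψ q)/2)^2 := by
      have := hψ0 ((p+q)/2)
      nlinarith [hmid]
    have h2 : ((ψ p + ψ q)/2)^2 < (ψ p^2 + ψ q^2)/2 := by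
      have hne : ψ p - ψ q ≠ 0 := sub_ne_zero.2 hab
      have : (ψ p - ψ q)^2 > 0 := by positivity
      nlinarith
    linarith

end Psi

/-! ### Continuity and the maximum principle -/

lemma arcosh_comp_continuous (K L θ c : ℝ) (hK : 0 < K) (hL : 0 ≤ L) (hKL : 1 ≤ K + L) :
    Continuous (fun u => arcosh (K * Real.cosh (c*u - θ) + L)) := by
  have hf : Continuous (fun u : ℝ => K * Real.cosh (c*u - θ) + L) := by
    apply Continuous.add _ continuous_const
    exact continuous_const.mul (Real.continuous_cosh.comp
      ((continuous_const.mul continuous_id).sub continuous_const))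
  have hge : ∀ u : ℝ, 1 ≤ K * Real.cosh (c*u - θ) + L := by
    intro u
    have := Real.one_le_cosh (c*u - θ)
    nlinarith
  unfold arcosh
  apply Continuous.log
  · exact hf.add ((hf.pow 2).sub continuous_const).sqrt
  · intro u
    have h1 := hge u
    have h2 := Real.sqrt_nonneg ((K * Real.cosh (c*u - θ) + L)^2 - 1)
    positivity

lemma midpoint_convex_le_max {g : ℝ → ℝ} (hg : Continuous g)
    (hmid : ∀ p q : ℝ, g ((p+q)/2) ≤ (g p + g q)/2)
    {p q x : ℝ} (hpq : p ≤ q) (hx : x ∈ Set.Icc p q) : g x ≤ max (g p) (g q) := by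
  have hne : (Set.Icc p q).Nonempty := ⟨p, le_refl p, hpq⟩
  obtain ⟨z, hz, hzmax⟩ := isCompact_Icc.exists_isMaxOn hne hg.continuousOn
  have hxz : g x ≤ g z := hzmax hx
  set T := Set.Icc p q ∩ g ⁻¹' {g z} with hT
  have hTclosed : IsClosed T := isClosed_Icc.inter (isClosed_singleton.preimage hg)
  have hTne : T.Nonempty := ⟨z, hz, rfl⟩
  have hTbdd : BddBelow T := (bddBelow_Icc).mono Set.inter_subset_left
  set w := sInf T with hw
  have hwT : w ∈ T := hTclosed.csInf_mem hTne hTbdd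
  obtain ⟨⟨hwp, hwq⟩, hwval⟩ := hwT
  have hwval' : g w = g z := hwval
  rcases eq_or_lt_of_le hwp with hweq | hwgt
  · have : g z = g p := by rw [← hwval', ← hweq]
    rw [this] at hxz
    exact le_trans hxz (le_max_left _ _)
  rcases eq_or_lt_of_le hwq with hweq | hwlt
  · have : g z = g q := by rw [← hwval', hweq]
    rw [this] at hxz
    exact le_trans hxz (le_max_right _ _)
  exfalso
  set δ := min (w - p) (q - w) with hδ
  have hδ0 : 0 < δ := lt_min (by linarith) (by linarith)
  have hmem1 : w - δ ∈ Set.Icc p q := by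
    constructor
    · have : δ ≤ w - p := min_le_left _ _
      linarith
    · linarith
  have hmem2 : w + δ ∈ Set.Icc p q := by
    constructor
    · linarith
    · have : δ ≤ q - w := min_le_right _ _
      linarith
  have hlt1 : g (w - δ) < g z := by
    have hle1 : g (w - δ) ≤ g z := hzmax hmem1
    rcases lt_or_eq_of_le hle1 with h | h
    · exact h
    · exfalso
      have : w - δ ∈ T := ⟨hmem1, h⟩
      have := csInf_le hTbdd this
      rw [← hw] at this
      linarith
  have hle2 : g (w + δ) ≤ g z := hzmax hmem2
  have := hmid (w - δ) (w + δ)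
  rw [show (w - δ + (w + δ))/2 = w by ring] at this
  rw [hwval'] at this
  linarith

/-! ### Main theorem -/

theorem bisectors_of_consecutive_orbit_points_disjoint
    (α β : ℝ) (hα : 0 ≤ α) (hβ : 0 ≤ β) (hαβ : (α, β) ≠ (0, 0))
    (uminus u0 uplus : ℝ) (hminus : uminus < u0) (hplus : u0 < uplus) :
    ¬ ∃ x y : EuclideanSpace ℂ (Fin 2), ‖x‖ < 1 ∧ ‖y‖ < 1 ∧
      prodDist (x, y) (orbitPt α β uminus) = prodDist (x, y) (orbitPt α β u0) ∧
      prodDist (x, y) (orbitPt α β u0) = prodDist (x, y) (orbitPt α β uplus) := by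
  rintro ⟨x, y, hx, hy, h1, h2⟩
  obtain ⟨K₁, L₁, θ₁, hK₁, hL₁, hKL₁, hfx⟩ := factor_formula x hx
  obtain ⟨K₂, L₂, θ₂, hK₂, hL₂, hKL₂, hfy⟩ := factor_formula y hy
  set ψ₁ : ℝ → ℝ := fun u => bergmanDist x (axisPt (Real.tanh (α*u))) with hψ₁def
  set ψ₂ : ℝ → ℝ := fun u => bergmanDist y (axisPt (Real.tanh (β*u))) with hψ₂def
  have hψ₁0 : ∀ u, 0 ≤ ψ₁ u := fun u => (hfx (α*u)).1
  have hψ₂0 : ∀ u, 0 ≤ ψ₂ u := fun u => (hfy (β*u)).1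
  have hψ₁c : ∀ u, Real.cosh (ψ₁ u) = K₁ * Real.cosh ((2*α)*u - θ₁) + L₁ := by
    intro u
    have := (hfx (α*u)).2
    rwa [show 2*(α*u) = (2*α)*u by ring] at this
  have hψ₂c : ∀ u, Real.cosh (ψ₂ u) = K₂ * Real.cosh ((2*β)*u - θ₂) + L₂ := by
    intro u
    have := (hfy (β*u)).2
    rwa [show 2*(β*u) = (2*β)*u by ring] at this
  set g : ℝ → ℝ := fun u => ψ₁ u^2 + ψ₂ u^2 with hgdef
  have hg0 : ∀ u, 0 ≤ g u := by
    intro u; rw [hgdef]; positivity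
  have hprodg : ∀ u, prodDist (x, y) (orbitPt α β u) = Real.sqrt (g u) := by
    intro u
    simp only [hgdef, hψ₁def, hψ₂def, prodDist, orbitPt]
  have e1 : g uminus = g u0 := by
    rw [hprodg uminus, hprodg u0] at h1
    calc g uminus = Real.sqrt (g uminus)^2 := (Real.sq_sqrt (hg0 uminus)).symm
      _ = Real.sqrt (g u0)^2 := by rw [h1]
      _ = g u0 := Real.sq_sqrt (hg0 u0)
  have e2 : g u0 = g uplus := by
    rw [hprodg uplus, hprodg u0] at h2
    calc g u0 = Real.sqrt (g u0)^2 := (Real.sq_sqrt (hg0 u0)).symm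
      _ = Real.sqrt (g uplus)^2 := by rw [h2]
      _ = g uplus := Real.sq_sqrt (hg0 uplus)
  -- midpoint convexity
  have hmid : ∀ p q : ℝ, g ((p+q)/2) ≤ (g p + g q)/2 := by
    intro p q
    have n1 := psi_sq_midpoint hK₁ hL₁ hKL₁ hψ₁0 hψ₁c p q
    have n2 := psi_sq_midpoint hK₂ hL₂ hKL₂ hψ₂0 hψ₂c p q
    rw [hgdef]; dsimp only; linarith
  -- continuity
  have hc1 : Continuous ψ₁ := by
    have hh : ψ₁ = fun u => arcosh (K₁ * Real.cosh ((2*α)*u - θ₁) + L₁) := by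
      funext u; rw [← hψ₁c u, arcosh_cosh (hψ₁0 u)]
    rw [hh]; exact arcosh_comp_continuous _ _ _ _ hK₁ hL₁ hKL₁
  have hc2 : Continuous ψ₂ := by
    have hh : ψ₂ = fun u => arcosh (K₂ * Real.cosh ((2*β)*u - θ₂) + L₂) := by
      funext u; rw [← hψ₂c u, arcosh_cosh (hψ₂0 u)]
    rw [hh]; exact arcosh_comp_continuous _ _ _ _ hK₂ hL₂ hKL₂
  have hgcont : Continuous g := by
    rw [hgdef]; exact (hc1.pow 2).add (hc2.pow 2)
  -- strictness
  have hne : α ≠ 0 ∨ β ≠ 0 := by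
    by_contra h
    push_neg at h
    exact hαβ (by rw [h.1, h.2])
  -- set up the contradiction
  set ε := min (u0 - uminus) (uplus - u0) with hε
  have hε0 : 0 < ε := lt_min (by linarith) (by linarith)
  have hp'ne : u0 - ε ≠ u0 + ε := ne_of_lt (by linarith)
  have hstrict : g ((u0 - ε + (u0 + ε))/2) < (g (u0 - ε) + g (u0 + ε))/2 := by
    rcases hne with hα0 | hβ0
    · have m1 := psi_strict_mid hK₁ hL₁ hKL₁ hψ₁0 hψ₁c
        (mul_ne_zero two_ne_zero hα0) hp'ne
      have m2 := psi_sq_midpoint hK₂ hL₂ hKL₂ hψ₂0 hψ₂c (u0 - ε) (u0 + ε)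
      rw [hgdef]; dsimp only; linarith
    · have m1 := psi_sq_midpoint hK₁ hL₁ hKL₁ hψ₁0 hψ₁c (u0 - ε) (u0 + ε)
      have m2 := psi_strict_mid hK₂ hL₂ hKL₂ hψ₂0 hψ₂c
        (mul_ne_zero two_ne_zero hβ0) hp'ne
      rw [hgdef]; dsimp only; linarith
  rw [show (u0 - ε + (u0 + ε))/2 = u0 by ring] at hstrict
  have hle : uminus ≤ uplus := by linarith
  have hb1 : g (u0 - ε) ≤ g u0 := by
    have hmem : u0 - ε ∈ Set.Icc uminus uplus := by
      constructor
      · have : ε ≤ u0 - uminus := min_le_left _ _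
        linarith
      · linarith
    have := midpoint_convex_le_max hgcont hmid hle hmem
    calc g (u0 - ε) ≤ max (g uminus) (g uplus) := this
      _ = g u0 := by rw [e1, ← e2, max_self]
  have hb2 : g (u0 + ε) ≤ g u0 := by
    have hmem : u0 + ε ∈ Set.Icc uminus uplus := by
      constructor
      · linarith
      · have : ε ≤ uplus - u0 := min_le_right _ _
        linarith
    have := midpoint_convex_le_max hgcont hmid hle hmem
    calc g (u0 + ε) ≤ max (g uminus) (g uplus) := this
      _ = g u0 := by rw [e1, ← e2, max_self]
  clear_value g ψ₁ ψ₂ ε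
  linarith

end
end
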